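/- arXiv:2305.07486 — 3 statements merged into one kernel-verified Lean document; each statement's English description precedes it below -/
import Mathlib

section
/- Let X ∈ ℝ^{n×d} have full column rank, y ∈ ℝⁿ, and let A = SᵀX be k selected rows with labels y_A = Sᵀy. Let P_A = A(XᵀX)⁻¹Aᵀ and assume ‖P_A‖₂ < 1. Let w* = (XᵀX)⁻¹Xᵀy and let w_A⁻ be the least squares solution on the remaining n-k rows. Then ‖X w_A⁻ - y‖² = ‖X w* - y‖² + (A w* - y_A)ᵀ (I_k - P_A)⁻¹ P_A (I_k - P_A)⁻¹ (A w* - y_A). -/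
open Matrix

noncomputable def opNorm {m n : Type*} [Fintype m] [Fintype n] [DecidableEq n]
    (A : Matrix m n ℝ) : ℝ :=
  ‖(Matrix.toEuclideanLin A).toContinuousLinearMap‖

lemma aux_oneSub_unit (k : ℕ) (P : Matrix (Fin k) (Fin k) ℝ) (hP : opNorm P < 1) :
    IsUnit (1 - P).det := by
  rw [isUnit_iff_ne_zero]
  intro hdet
  obtain ⟨v, hv, hv0⟩ := (Matrix.exists_mulVec_eq_zero_iff).mpr hdet
  set f := (Matrix.toEuclideanLin P).toContinuousLinearMap with hf
  have h1 : ‖f‖ < 1 := hP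
  let u := Units.oneSub f h1
  set x : EuclideanSpace ℝ (Fin k) := (WithLp.equiv 2 (Fin k → ℝ)).symm v with hx
  have hux : u.val x = 0 := by
    have : u.val x = x - f x := by
      simp [u, Units.oneSub, ContinuousLinearMap.sub_apply]
    rw [this]
    have hfx : f x = (WithLp.equiv 2 (Fin k → ℝ)).symm (P *ᵥ v) := by
      simp [hf, hx, Matrix.toEuclideanLin_apply]
    rw [hfx, hx, WithLp.equiv_symm_apply, ← WithLp.toLp_sub]
    have : v - P *ᵥ v = (1 - P) *ᵥ v := by
      rw [Matrix.sub_mulVec, Matrix.one_mulVec]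
    rw [this, hv0]
    simp
  have : x = 0 := by
    have h := congrArg (fun (g : EuclideanSpace ℝ (Fin k) →L[ℝ] EuclideanSpace ℝ (Fin k)) => g x) u.inv_mul
    simp only [ContinuousLinearMap.mul_apply, ContinuousLinearMap.one_apply] at h
    rw [hux] at h
    simpa using h.symm
  exact hv (by simpa [hx] using congrArg (WithLp.equiv 2 (Fin k → ℝ)) this)

/-- Exact leave-`A`-out regression error formula. The removed rows are those
indexed by the injective map `g : Fin k → Fin n`; the deficient least-squares
solution is expressed via its normal equations
`w_A⁻ = (XᵀX - AᵀA)⁻¹ (Xᵀy - Aᵀ y_A)`. -/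
theorem leave_A_out_error (n d k : ℕ)
    (X : Matrix (Fin n) (Fin d) ℝ) (y : Fin n → ℝ)
    (hX : IsUnit (Xᵀ * X))
    (g : Fin k → Fin n) (hg : Function.Injective g) :
    let A : Matrix (Fin k) (Fin d) ℝ := X.submatrix g id
    let yA : Fin k → ℝ := fun i => y (g i)
    let PA : Matrix (Fin k) (Fin k) ℝ := A * (Xᵀ * X)⁻¹ * Aᵀ
    let wstar : Fin d → ℝ := (Xᵀ * X)⁻¹ *ᵥ (Xᵀ *ᵥ y)
    let wA : Fin d → ℝ := (Xᵀ * X - Aᵀ * A)⁻¹ *ᵥ (Xᵀ *ᵥ y - Aᵀ *ᵥ yA)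
    let r : Fin k → ℝ := A *ᵥ wstar - yA
    opNorm PA < 1 →
      ∑ i, (X *ᵥ wA - y) i ^ 2
        = ∑ i, (X *ᵥ wstar - y) i ^ 2
          + r ⬝ᵥ (((1 - PA)⁻¹ * PA * (1 - PA)⁻¹) *ᵥ r) := by
  intro A yA PA wstar wA r hP
  have hPA : PA = A * (Xᵀ * X)⁻¹ * Aᵀ := rfl
  have hwstar : wstar = (Xᵀ * X)⁻¹ *ᵥ (Xᵀ *ᵥ y) := rfl
  have hwAdef : wA = (Xᵀ * X - Aᵀ * A)⁻¹ *ᵥ (Xᵀ *ᵥ y - Aᵀ *ᵥ yA) := rfl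
  have hr : r = A *ᵥ wstar - yA := rfl
  -- basic invertibility facts
  have hMd : IsUnit (Xᵀ * X).det := (Matrix.isUnit_iff_isUnit_det _).mp hX
  have h1 : (Xᵀ * X) * (Xᵀ * X)⁻¹ = 1 := Matrix.mul_nonsing_inv _ hMd
  have h2 : (Xᵀ * X)⁻¹ * (Xᵀ * X) = 1 := Matrix.nonsing_inv_mul _ hMd
  have hMT : (Xᵀ * X)ᵀ = Xᵀ * X := by rw [Matrix.transpose_mul, Matrix.transpose_transpose]
  have hMiT : ((Xᵀ * X)⁻¹)ᵀ = (Xᵀ * X)⁻¹ := by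
    rw [Matrix.transpose_nonsing_inv, hMT]
  have hPAT : PAᵀ = PA := by
    rw [hPA]
    simp [Matrix.transpose_mul, hMiT, Matrix.mul_assoc]
  have hQdet : IsUnit (1 - PA).det := aux_oneSub_unit k PA hP
  have hQ1 : (1 - PA) * (1 - PA)⁻¹ = 1 := Matrix.mul_nonsing_inv _ hQdet
  have hQ2 : (1 - PA)⁻¹ * (1 - PA) = 1 := Matrix.nonsing_inv_mul _ hQdet
  have hQT : ((1 - PA)⁻¹)ᵀ = (1 - PA)⁻¹ := by
    rw [Matrix.transpose_nonsing_inv, Matrix.transpose_sub, Matrix.transpose_one, hPAT]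
  -- N is invertible
  have hNfac : Xᵀ * X - Aᵀ * A = (Xᵀ * X) * (1 - (Xᵀ * X)⁻¹ * (Aᵀ * A)) := by
    rw [Matrix.mul_sub, Matrix.mul_one, ← Matrix.mul_assoc, h1, Matrix.one_mul]
  have hNd : IsUnit (Xᵀ * X - Aᵀ * A).det := by
    rw [hNfac, Matrix.det_mul]
    refine hMd.mul ?_
    have : (Xᵀ * X)⁻¹ * (Aᵀ * A) = ((Xᵀ * X)⁻¹ * Aᵀ) * A := by
      rw [Matrix.mul_assoc]
    rw [this, Matrix.det_one_sub_mul_comm]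
    have : A * ((Xᵀ * X)⁻¹ * Aᵀ) = PA := by rw [hPA, Matrix.mul_assoc]
    rw [this]
    exact hQdet
  have hN1 : (Xᵀ * X - Aᵀ * A) * (Xᵀ * X - Aᵀ * A)⁻¹ = 1 := Matrix.mul_nonsing_inv _ hNd
  have hN2 : (Xᵀ * X - Aᵀ * A)⁻¹ * (Xᵀ * X - Aᵀ * A) = 1 := Matrix.nonsing_inv_mul _ hNd
  -- the correction matrix
  set C : Matrix (Fin d) (Fin k) ℝ := (Xᵀ * X)⁻¹ * Aᵀ * (1 - PA)⁻¹ with hC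
  have hNC : (Xᵀ * X - Aᵀ * A) * C = Aᵀ := by
    rw [hC, Matrix.sub_mul]
    have e1 : (Xᵀ * X) * ((Xᵀ * X)⁻¹ * Aᵀ * (1 - PA)⁻¹) = Aᵀ * (1 - PA)⁻¹ := by
      rw [← Matrix.mul_assoc, ← Matrix.mul_assoc, h1, Matrix.one_mul]
    have e2 : (Aᵀ * A) * ((Xᵀ * X)⁻¹ * Aᵀ * (1 - PA)⁻¹) = Aᵀ * (PA * (1 - PA)⁻¹) := by
      rw [hPA]
      simp only [Matrix.mul_assoc]
    rw [e1, e2, ← Matrix.mul_one (Aᵀ * (1 - PA)⁻¹), Matrix.mul_assoc, ← Matrix.mul_sub,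
      Matrix.mul_one]
    have : (1 - PA)⁻¹ - PA * (1 - PA)⁻¹ = (1 - PA) * (1 - PA)⁻¹ := by
      rw [Matrix.sub_mul, Matrix.one_mul]
    rw [this, hQ1, Matrix.mul_one]
  -- wA = wstar + C *ᵥ r
  have hNwstar : (Xᵀ * X - Aᵀ * A) *ᵥ wstar = Xᵀ *ᵥ y - Aᵀ *ᵥ (A *ᵥ wstar) := by
    rw [Matrix.sub_mulVec, hwstar, Matrix.mulVec_mulVec, h1, Matrix.one_mulVec]
    rw [← Matrix.mulVec_mulVec]
  have hkey : (Xᵀ * X - Aᵀ * A) *ᵥ (wstar + C *ᵥ r) = Xᵀ *ᵥ y - Aᵀ *ᵥ yA := by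
    rw [Matrix.mulVec_add, hNwstar, Matrix.mulVec_mulVec r (Xᵀ * X - Aᵀ * A) C, hNC,
      hr, Matrix.mulVec_sub, sub_add_sub_cancel]
  have hwA : wA = wstar + C *ᵥ r := by
    rw [hwAdef, ← hkey,
      Matrix.mulVec_mulVec (wstar + C *ᵥ r) (Xᵀ * X - Aᵀ * A)⁻¹ (Xᵀ * X - Aᵀ * A),
      hN2, Matrix.one_mulVec]
  -- residual orthogonality
  have hXe : Xᵀ *ᵥ (X *ᵥ wstar - y) = 0 := by
    rw [Matrix.mulVec_sub, Matrix.mulVec_mulVec, hwstar, Matrix.mulVec_mulVec,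
      h1, Matrix.one_mulVec, sub_self]
  -- B := X * C, and Bᵀ * B
  have hBtB : (X * C)ᵀ * (X * C) = (1 - PA)⁻¹ * PA * (1 - PA)⁻¹ := by
    rw [hC]
    simp only [Matrix.transpose_mul, Matrix.transpose_transpose, hMiT, hQT]
    calc (1 - PA)⁻¹ * (A * (Xᵀ * X)⁻¹) * Xᵀ * (X * ((Xᵀ * X)⁻¹ * Aᵀ * (1 - PA)⁻¹))
        = (1 - PA)⁻¹ * (A * ((Xᵀ * X)⁻¹ * (Xᵀ * X) * ((Xᵀ * X)⁻¹ * (Aᵀ * (1 - PA)⁻¹)))) := by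
          simp only [Matrix.mul_assoc]
      _ = (1 - PA)⁻¹ * PA * (1 - PA)⁻¹ := by
          rw [h2, Matrix.one_mul, hPA]
          simp only [Matrix.mul_assoc]
  -- assemble
  have hXwA : X *ᵥ wA - y = (X *ᵥ wstar - y) + (X * C) *ᵥ r := by
    rw [hwA, Matrix.mulVec_add, Matrix.mulVec_mulVec r X C, add_sub_right_comm]
  have hsum : ∀ w : Fin n → ℝ, ∑ i, w i ^ 2 = w ⬝ᵥ w := by
    intro w; simp [dotProduct, sq]
  rw [hsum, hsum, hXwA]
  set e := X *ᵥ wstar - y with he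
  set v := (X * C) *ᵥ r with hv
  have hev : e ⬝ᵥ v = 0 := by
    rw [hv, Matrix.dotProduct_mulVec]
    have : e ᵥ* (X * C) = (e ᵥ* X) ᵥ* C := by rw [Matrix.vecMul_vecMul]
    rw [this, ← Matrix.mulVec_transpose X e, hXe, Matrix.zero_vecMul, zero_dotProduct]
  have hvv : v ⬝ᵥ v = r ⬝ᵥ (((1 - PA)⁻¹ * PA * (1 - PA)⁻¹) *ᵥ r) := by
    rw [hv, Matrix.dotProduct_mulVec ((X * C) *ᵥ r),
      ← Matrix.mulVec_transpose (X * C) ((X * C) *ᵥ r),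
      Matrix.mulVec_mulVec r (X * C)ᵀ (X * C), hBtB, dotProduct_comm]
  rw [add_dotProduct, dotProduct_add, dotProduct_add]
  rw [hev, dotProduct_comm v e, hev, hvv]
  ring
end

section
/- Let X ∈ ℝ^{n×d} have full column rank, y ∈ ℝⁿ, w* the least squares solution, and ℓ_i the i-th leverage score with ℓ_i < 1. If w_i⁻ is the least squares solution after removing row i, then ‖X w_i⁻ - y‖² = ‖X w* - y‖² + (ℓ_i/(1-ℓ_i)²)·(x_iᵀw* - y_i)². -/
open Matrix

private lemma vmv_mul_vmv {d : ℕ} (a b c e : Fin d → ℝ) :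
    vecMulVec a b * vecMulVec c e = (b ⬝ᵥ c) • vecMulVec a e := by
  ext i j
  simp only [mul_apply, vecMulVec_apply, Matrix.smul_apply, dotProduct, smul_eq_mul,
    Finset.sum_mul]
  exact Finset.sum_congr rfl fun k _ => by ring

private lemma mul_vmv {d : ℕ} (M : Matrix (Fin d) (Fin d) ℝ) (a b : Fin d → ℝ) :
    M * vecMulVec a b = vecMulVec (M *ᵥ a) b := by
  ext i j
  simp only [mul_apply, vecMulVec_apply, mulVec, dotProduct, Finset.sum_mul]
  exact Finset.sum_congr rfl fun k _ => by ring

private lemma vmv_mul {d : ℕ} (M : Matrix (Fin d) (Fin d) ℝ) (a b : Fin d → ℝ) :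
    vecMulVec a b * M = vecMulVec a (b ᵥ* M) := by
  ext i j
  simp only [mul_apply, vecMulVec_apply, vecMul, dotProduct, Finset.mul_sum]
  exact Finset.sum_congr rfl fun k _ => by ring

private lemma vmv_mulVec {d : ℕ} (a b v : Fin d → ℝ) :
    vecMulVec a b *ᵥ v = (b ⬝ᵥ v) • a := by
  ext i
  simp only [mulVec, vecMulVec_apply, dotProduct, Pi.smul_apply, smul_eq_mul,
    Finset.sum_mul]
  exact Finset.sum_congr rfl fun k _ => by ring

/-- Leave-one-out regression error formula (k = 1 case). `ℓ` is the `i`-th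
leverage score, i.e. the `i`-th diagonal entry of the hat matrix
`X(XᵀX)⁻¹Xᵀ`, and the deficient least-squares solution `w_i⁻` is given by
its normal equations `(XᵀX - x_i x_iᵀ)⁻¹ (Xᵀ y - x_i y_i)`. -/
theorem leave_one_out_error (n d : ℕ)
    (X : Matrix (Fin n) (Fin d) ℝ) (y : Fin n → ℝ)
    (hX : IsUnit (Xᵀ * X)) (i : Fin n) :
    let xi : Fin d → ℝ := fun j => X i j
    let ℓ : ℝ := (X * (Xᵀ * X)⁻¹ * Xᵀ) i i
    let wstar : Fin d → ℝ := (Xᵀ * X)⁻¹ *ᵥ (Xᵀ *ᵥ y)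
    let wi : Fin d → ℝ :=
      (Xᵀ * X - Matrix.vecMulVec xi xi)⁻¹ *ᵥ (Xᵀ *ᵥ y - y i • xi)
    ℓ < 1 →
      ∑ j, (X *ᵥ wi - y) j ^ 2
        = ∑ j, (X *ᵥ wstar - y) j ^ 2
          + (ℓ / (1 - ℓ) ^ 2) * (xi ⬝ᵥ wstar - y i) ^ 2 := by
  intro xi ℓ wstar wi hℓ1
  set A : Matrix (Fin d) (Fin d) ℝ := Xᵀ * X with hA
  have hdet : IsUnit A.det := (Matrix.isUnit_iff_isUnit_det A).mp hX
  have hA1 : A * A⁻¹ = 1 := Matrix.mul_nonsing_inv A hdet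
  have hA2 : A⁻¹ * A = 1 := Matrix.nonsing_inv_mul A hdet
  -- symmetry of A⁻¹
  have hAt : Aᵀ = A := by rw [hA, transpose_mul, transpose_transpose]
  have hAit : A⁻¹ᵀ = A⁻¹ := by rw [Matrix.transpose_nonsing_inv, hAt]
  set g : Fin d → ℝ := A⁻¹ *ᵥ xi with hg
  have hvg : xi ᵥ* A⁻¹ = g := by rw [← Matrix.mulVec_transpose, hAit]
  -- a symmetry helper for dot products against `g`
  have hgdot : ∀ u : Fin d → ℝ, g ⬝ᵥ u = xi ⬝ᵥ (A⁻¹ *ᵥ u) := by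
    intro u
    rw [dotProduct_comm, Matrix.dotProduct_mulVec, ← Matrix.mulVec_transpose, hAit,
      dotProduct_comm]
  -- leverage score as a dot product
  have hℓdot : ℓ = xi ⬝ᵥ g := by
    show (X * A⁻¹ * Xᵀ) i i = _
    simp only [mul_apply, transpose_apply, dotProduct, hg, mulVec, dotProduct,
      Finset.sum_mul]
    rw [Finset.sum_comm]
    refine Finset.sum_congr rfl fun k _ => ?_
    rw [Finset.mul_sum]
    exact Finset.sum_congr rfl fun l _ => by simp only [xi]; ring
  have h1ℓ : (1 : ℝ) - ℓ ≠ 0 := by linarith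
  set c : ℝ := (1 - ℓ)⁻¹ with hc
  set P : Matrix (Fin d) (Fin d) ℝ := vecMulVec xi xi with hP
  -- Sherman–Morrison: inverse of A - P
  have hAPg : A⁻¹ * P * A⁻¹ = vecMulVec g g := by
    rw [hP, mul_vmv, vmv_mul, hvg, ← hg]
  have hinv : (A - P)⁻¹ = A⁻¹ + c • vecMulVec g g := by
    apply Matrix.inv_eq_right_inv
    have hPA : P * (A⁻¹ * P * A⁻¹) = ℓ • (P * A⁻¹) := by
      rw [hAPg, hP, vmv_mul_vmv, ← hℓdot, vmv_mul, hvg]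
    have h3 : A * (A⁻¹ * P * A⁻¹) = P * A⁻¹ := by
      rw [← Matrix.mul_assoc, ← Matrix.mul_assoc, hA1, Matrix.one_mul]
    rw [← hAPg, sub_mul, mul_add, mul_add, hA1, Matrix.mul_smul, Matrix.mul_smul,
      h3, hPA, smul_smul]
    have hcoef : c - 1 - c * ℓ = 0 := by
      rw [hc]; field_simp; ring
    have hz : c • (P * A⁻¹) - (1:ℝ) • (P * A⁻¹) - (c * ℓ) • (P * A⁻¹) = 0 := by
      rw [← sub_smul, ← sub_smul, hcoef, zero_smul]
    have h1s : (1:ℝ) • (P * A⁻¹) = P * A⁻¹ := one_smul _ _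
    calc 1 + c • (P * A⁻¹) - (P * A⁻¹ + (c * ℓ) • (P * A⁻¹))
        = 1 + (c • (P * A⁻¹) - (1:ℝ) • (P * A⁻¹) - (c * ℓ) • (P * A⁻¹)) := by
          rw [h1s]; abel
      _ = 1 := by rw [hz, add_zero]
  -- the deficient solution
  set r : ℝ := xi ⬝ᵥ wstar - y i with hr
  have hwi : wi = wstar + (c * r) • g := by
    show (A - P)⁻¹ *ᵥ (Xᵀ *ᵥ y - y i • xi) = _
    rw [hinv, Matrix.add_mulVec, Matrix.mulVec_sub, Matrix.mulVec_smul,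
      Matrix.smul_mulVec, vmv_mulVec]
    have hgv : g ⬝ᵥ (Xᵀ *ᵥ y - y i • xi) = (xi ⬝ᵥ wstar) - y i * ℓ := by
      rw [dotProduct_sub, hgdot, dotProduct_smul, dotProduct_comm g xi, ← hℓdot]
      show xi ⬝ᵥ wstar - y i * ℓ = _
      ring
    rw [hgv]
    show wstar - y i • g + c • ((xi ⬝ᵥ wstar - y i * ℓ) • g) = wstar + (c * r) • g
    rw [smul_smul]
    have hco : c * (xi ⬝ᵥ wstar - y i * ℓ) - y i = c * r := by
      rw [hr, hc]; field_simp; ring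
    calc wstar - y i • g + (c * (xi ⬝ᵥ wstar - y i * ℓ)) • g
        = wstar + ((c * (xi ⬝ᵥ wstar - y i * ℓ)) - y i) • g := by rw [sub_smul]; abel
      _ = wstar + (c * r) • g := by rw [hco]
  -- residual decomposition
  set e : Fin n → ℝ := X *ᵥ wstar - y with he
  set f : Fin n → ℝ := X *ᵥ g with hf
  have hres : X *ᵥ wi - y = e + (c * r) • f := by
    rw [hwi, Matrix.mulVec_add, Matrix.mulVec_smul, he, hf]; abel
  -- orthogonality : Xᵀ e = 0
  have horth : Xᵀ *ᵥ e = 0 := by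
    rw [he, Matrix.mulVec_sub, Matrix.mulVec_mulVec, ← hA]
    show A *ᵥ (A⁻¹ *ᵥ (Xᵀ *ᵥ y)) - _ = 0
    rw [Matrix.mulVec_mulVec, hA1, Matrix.one_mulVec, sub_self]
  have hef : e ⬝ᵥ f = 0 := by
    rw [hf, Matrix.dotProduct_mulVec, ← Matrix.mulVec_transpose, horth, zero_dotProduct]
  have hff : f ⬝ᵥ f = ℓ := by
    rw [hf, Matrix.dotProduct_mulVec, ← Matrix.mulVec_transpose, Matrix.mulVec_mulVec, ← hA]
    show (A *ᵥ (A⁻¹ *ᵥ xi)) ⬝ᵥ g = ℓ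
    rw [Matrix.mulVec_mulVec, hA1, Matrix.one_mulVec, hℓdot]
  -- expand the sum
  have hexp : ∑ j, (X *ᵥ wi - y) j ^ 2
      = ∑ j, e j ^ 2 + (2 * (c * r)) * (e ⬝ᵥ f) + (c * r) ^ 2 * (f ⬝ᵥ f) := by
    rw [hres]
    simp only [dotProduct]
    rw [Finset.mul_sum, Finset.mul_sum, ← Finset.sum_add_distrib, ← Finset.sum_add_distrib]
    refine Finset.sum_congr rfl fun j _ => ?_
    simp only [Pi.add_apply, Pi.smul_apply, smul_eq_mul]
    ring
  rw [hexp, hef, hff]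
  have hfinal : (2 * (c * r)) * 0 + (c * r) ^ 2 * ℓ = (ℓ / (1 - ℓ) ^ 2) * r ^ 2 := by
    rw [hc]; field_simp; ring
  rw [add_assoc, hfinal, he, hr]
end

section
/- Let X ∈ ℝ^{n×d} have full column rank, y ∈ ℝⁿ, w* the least squares solution, and fix k with dk < n. For each k-subset A of rows with ‖P_A‖₂ < 1 define p_A = (1/Z)(1-‖P_A‖₂)²/‖P_A‖₂ with Z the normalizing sum over all k-subsets. Sampling A according to p_A and letting w_A⁻ be the least squares solution on the remaining rows, E[‖X w_A⁻ - y‖²] ≤ (1 + dk²/(n-dk)²)·‖X w* - y‖². -/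
set_option linter.unusedSectionVars false
set_option maxHeartbeats 1000000
open Matrix
open scoped Matrix.Norms.L2Operator


open Matrix

variable {m l : Type*} [Fintype m] [DecidableEq m] [Fintype l] [DecidableEq l]

lemma opNorm_eq_norm (A : Matrix m l ℝ) : opNorm A = ‖A‖ := rfl

lemma norm_one_matrix [Nonempty m] : ‖(1 : Matrix m m ℝ)‖ = 1 := by
  rw [Matrix.cstar_norm_def, _root_.map_one]
  exact ContinuousLinearMap.norm_id

lemma norm_inv_one_sub_le [Nonempty m] {P : Matrix m m ℝ} (h : ‖P‖ < 1) :
    ‖(1 - P)⁻¹‖ ≤ (1 - ‖P‖)⁻¹ := by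
  rw [Matrix.nonsing_inv_eq_ringInverse, ← geom_series_eq_inverse P h]
  have := tsum_geometric_le_of_norm_lt_one P h
  rw [norm_one_matrix] at this
  linarith


lemma euc_norm_eq (x : l → ℝ) :
    ‖(WithLp.equiv 2 (l → ℝ)).symm x‖ = Real.sqrt (∑ j, x j ^ 2) := by
  rw [EuclideanSpace.norm_eq]
  simp [Real.norm_eq_abs, sq_abs]

lemma norm_mulVec_le (A : Matrix m l ℝ) (x : l → ℝ) :
    Real.sqrt (∑ i, (A *ᵥ x) i ^ 2) ≤ ‖A‖ * Real.sqrt (∑ j, x j ^ 2) := by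
  have h := Matrix.l2_opNorm_mulVec A ((WithLp.equiv 2 (l → ℝ)).symm x)
  rw [euc_norm_eq] at h
  have e1 : ‖(EuclideanSpace.equiv m ℝ).symm (A *ᵥ (WithLp.equiv 2 (l → ℝ)).symm x)‖
      = Real.sqrt (∑ i, (A *ᵥ x) i ^ 2) := by
    rw [show ((A *ᵥ (WithLp.equiv 2 (l → ℝ)).symm x : m → ℝ)) = A *ᵥ x from rfl]
    exact euc_norm_eq _
  rwa [e1] at h

lemma sum_sq_mulVec_le (A : Matrix m l ℝ) (x : l → ℝ) :
    ∑ i, (A *ᵥ x) i ^ 2 ≤ ‖A‖ ^ 2 * ∑ j, x j ^ 2 := by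
  have h := norm_mulVec_le A x
  have h1 : (0:ℝ) ≤ ∑ i, (A *ᵥ x) i ^ 2 := Finset.sum_nonneg fun _ _ => sq_nonneg _
  have h2 : (0:ℝ) ≤ ∑ j, x j ^ 2 := Finset.sum_nonneg fun _ _ => sq_nonneg _
  have := mul_self_le_mul_self (Real.sqrt_nonneg _) h
  rw [Real.mul_self_sqrt h1] at this
  calc ∑ i, (A *ᵥ x) i ^ 2 ≤ (‖A‖ * Real.sqrt (∑ j, x j ^ 2)) * (‖A‖ * Real.sqrt (∑ j, x j ^ 2)) := this
    _ = ‖A‖ ^ 2 * ∑ j, x j ^ 2 := by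
        rw [mul_mul_mul_comm, Real.mul_self_sqrt h2]; ring

lemma qform_le (B : Matrix m m ℝ) (r : m → ℝ) :
    r ⬝ᵥ (B *ᵥ r) ≤ ‖B‖ * ∑ i, r i ^ 2 := by
  have h1 : (0:ℝ) ≤ ∑ i, r i ^ 2 := Finset.sum_nonneg fun _ _ => sq_nonneg _
  have key : r ⬝ᵥ (B *ᵥ r) ≤ Real.sqrt (∑ i, r i ^ 2) * Real.sqrt (∑ i, (B *ᵥ r) i ^ 2) := by
    have := real_inner_le_norm ((WithLp.equiv 2 (m → ℝ)).symm r) ((WithLp.equiv 2 (m → ℝ)).symm (B *ᵥ r))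
    rw [euc_norm_eq, euc_norm_eq] at this
    refine le_trans (le_of_eq ?_) this
    rw [PiLp.inner_apply]
    simp [dotProduct, mul_comm]
  calc r ⬝ᵥ (B *ᵥ r) ≤ Real.sqrt (∑ i, r i ^ 2) * Real.sqrt (∑ i, (B *ᵥ r) i ^ 2) := key
    _ ≤ Real.sqrt (∑ i, r i ^ 2) * (‖B‖ * Real.sqrt (∑ i, r i ^ 2)) := by
        refine mul_le_mul_of_nonneg_left (norm_mulVec_le B r) (Real.sqrt_nonneg _)
    _ = ‖B‖ * (Real.sqrt (∑ i, r i ^ 2) * Real.sqrt (∑ i, r i ^ 2)) := by ring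
    _ = ‖B‖ * ∑ i, r i ^ 2 := by rw [Real.mul_self_sqrt h1]
lemma opNorm_le_frob (C : Matrix m l ℝ) :
    ‖C‖ ≤ Real.sqrt (∑ i, ∑ j, C i j ^ 2) := by
  rw [Matrix.l2_opNorm_def]
  refine ContinuousLinearMap.opNorm_le_bound _ (Real.sqrt_nonneg _) fun x => ?_
  set xf : l → ℝ := WithLp.equiv 2 (l → ℝ) x with hxf
  have hx : x = (WithLp.equiv 2 (l → ℝ)).symm xf := rfl
  have lhs : ((Matrix.toEuclideanLin ≪≫ₗ LinearMap.toContinuousLinearMap) C) x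
      = (WithLp.equiv 2 (m → ℝ)).symm (C *ᵥ xf) := rfl
  have hxn : ‖x‖ = Real.sqrt (∑ j, xf j ^ 2) := by rw [hx]; exact euc_norm_eq _
  rw [lhs, euc_norm_eq, hxn]
  have hb : ∑ i, (C *ᵥ xf) i ^ 2 ≤ (∑ i, ∑ j, C i j ^ 2) * ∑ j, xf j ^ 2 := by
    rw [Finset.sum_mul]
    refine Finset.sum_le_sum fun i _ => ?_
    have := Finset.sum_mul_sq_le_sq_mul_sq Finset.univ (fun j => C i j) xf
    simpa [Matrix.mulVec, dotProduct] using this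
  calc Real.sqrt (∑ i, (C *ᵥ xf) i ^ 2) ≤ Real.sqrt ((∑ i, ∑ j, C i j ^ 2) * ∑ j, xf j ^ 2) :=
        Real.sqrt_le_sqrt hb
    _ = Real.sqrt (∑ i, ∑ j, C i j ^ 2) * Real.sqrt (∑ j, xf j ^ 2) := Real.sqrt_mul
        (Finset.sum_nonneg fun _ _ => Finset.sum_nonneg fun _ _ => sq_nonneg _) _

lemma norm_le_trace {P : Matrix m m ℝ} (hP : P.PosSemidef) : ‖P‖ ≤ P.trace := by
  obtain ⟨C, hC⟩ : ∃ C : Matrix m m ℝ, P = Cᴴ * C ∧ Cᴴ = C := by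
    open scoped MatrixOrder in
    refine ⟨CFC.sqrt P, ?_, ?_⟩
    · rw [(CFC.sqrt_nonneg P).posSemidef.isHermitian.eq, CFC.sqrt_mul_sqrt_self P hP.nonneg]
    · exact (CFC.sqrt_nonneg P).posSemidef.isHermitian.eq
  obtain ⟨hC1, hC2⟩ := hC
  have hnorm : ‖P‖ = ‖C‖ * ‖C‖ := by rw [hC1]; exact Matrix.l2_opNorm_conjTranspose_mul_self C
  have hfrob : ‖C‖ ≤ Real.sqrt (∑ i, ∑ j, C i j ^ 2) := opNorm_le_frob C
  have htr : P.trace = ∑ i, ∑ j, C i j ^ 2 := by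
    rw [hC1, Matrix.trace]
    congr 1
    ext i
    simp only [Matrix.diag_apply, Matrix.mul_apply, Matrix.conjTranspose_apply, star_trivial]
    have hsym : ∀ a b, C a b = C b a := by
      intro a b
      conv_lhs => rw [← hC2]
      simp [Matrix.conjTranspose_apply]
    exact Finset.sum_congr rfl fun j _ => by rw [hsym j i]; ring
  have h0 : (0:ℝ) ≤ ∑ i, ∑ j, C i j ^ 2 :=
    Finset.sum_nonneg fun _ _ => Finset.sum_nonneg fun _ _ => sq_nonneg _
  rw [hnorm, htr]
  calc ‖C‖ * ‖C‖ ≤ Real.sqrt (∑ i, ∑ j, C i j ^ 2) * Real.sqrt (∑ i, ∑ j, C i j ^ 2) :=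
        mul_le_mul hfrob hfrob (norm_nonneg _) (Real.sqrt_nonneg _)
    _ = _ := Real.mul_self_sqrt h0


lemma dot_helper {α β : Type*} [Fintype α] [Fintype β] (B : Matrix α β ℝ) (v : β → ℝ)
    (w : α → ℝ) : (B *ᵥ v) ⬝ᵥ w = v ⬝ᵥ (Bᵀ *ᵥ w) := by
  rw [dotProduct_comm, Matrix.dotProduct_mulVec, dotProduct_comm]
  congr 1
  rw [← Matrix.transpose_transpose B, Matrix.vecMul_transpose, Matrix.transpose_transpose]

section
variable {nn dd : ℕ} {m : Type*} [Fintype m] [DecidableEq m] [Nonempty m]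

lemma leave_out_bound (X : Matrix (Fin nn) (Fin dd) ℝ) (y : Fin nn → ℝ)
    (hX : IsUnit (Xᵀ * X))
    (A : Matrix m (Fin dd) ℝ) (yA : m → ℝ)
    (hP1 : ‖A * (Xᵀ * X)⁻¹ * Aᵀ‖ < 1) :
    ∑ j, ((X *ᵥ ((Xᵀ * X - Aᵀ * A)⁻¹ *ᵥ (Xᵀ *ᵥ y - Aᵀ *ᵥ yA)) - y) j) ^ 2
      ≤ ∑ j, ((X *ᵥ ((Xᵀ * X)⁻¹ *ᵥ (Xᵀ *ᵥ y)) - y) j) ^ 2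
        + (‖A * (Xᵀ * X)⁻¹ * Aᵀ‖ / (1 - ‖A * (Xᵀ * X)⁻¹ * Aᵀ‖) ^ 2)
          * ∑ i, ((A *ᵥ ((Xᵀ * X)⁻¹ *ᵥ (Xᵀ *ᵥ y)) - yA) i) ^ 2 := by
  set M : Matrix (Fin dd) (Fin dd) ℝ := Xᵀ * X with hM
  set P : Matrix m m ℝ := A * M⁻¹ * Aᵀ with hPdef
  set S : Matrix (Fin dd) (Fin dd) ℝ := Aᵀ * A with hS
  set wstar : Fin dd → ℝ := M⁻¹ *ᵥ (Xᵀ *ᵥ y) with hws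
  set wA : Fin dd → ℝ := (M - S)⁻¹ *ᵥ (Xᵀ *ᵥ y - Aᵀ *ᵥ yA) with hwA
  set r : m → ℝ := A *ᵥ wstar - yA with hr
  -- basic facts
  have hdet : IsUnit M.det := (Matrix.isUnit_iff_isUnit_det M).mp hX
  have hMM : M * M⁻¹ = 1 := Matrix.mul_nonsing_inv M hdet
  have hMM' : M⁻¹ * M = 1 := Matrix.nonsing_inv_mul M hdet
  have hMsym : Mᵀ = M := by rw [hM, Matrix.transpose_mul, Matrix.transpose_transpose]
  have hMisym : (M⁻¹)ᵀ = M⁻¹ := by rw [Matrix.transpose_nonsing_inv, hMsym]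
  have hPsym : Pᵀ = P := by
    rw [hPdef, Matrix.transpose_mul, Matrix.transpose_mul, Matrix.transpose_transpose, hMisym,
      Matrix.mul_assoc]
  have hIP : IsUnit (1 - P) := isUnit_one_sub_of_norm_lt_one hP1
  have hIPdet : IsUnit (1 - P).det := (Matrix.isUnit_iff_isUnit_det _).mp hIP
  have hQQ : (1 - P)⁻¹ * (1 - P) = 1 := Matrix.nonsing_inv_mul _ hIPdet
  have hQQ' : (1 - P) * (1 - P)⁻¹ = 1 := Matrix.mul_nonsing_inv _ hIPdet
  set Q : Matrix m m ℝ := (1 - P)⁻¹ with hQ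
  have hQsym : Qᵀ = Q := by
    rw [hQ, Matrix.transpose_nonsing_inv]
    congr 1
    rw [Matrix.transpose_sub, Matrix.transpose_one, hPsym]
  -- invertibility of M - S
  have hMSdet : IsUnit (M - S).det := by
    have e : M - S = M * (1 - M⁻¹ * Aᵀ * A) := by
      rw [Matrix.mul_sub, Matrix.mul_one, hS, ← Matrix.mul_assoc, ← Matrix.mul_assoc, hMM,
        Matrix.one_mul]
    rw [e, Matrix.det_mul]
    refine hdet.mul ?_
    have : (1 : Matrix (Fin dd) (Fin dd) ℝ) - M⁻¹ * Aᵀ * A = 1 - (M⁻¹ * Aᵀ) * A := by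
      rw [Matrix.mul_assoc]
    rw [this, Matrix.det_one_sub_mul_comm]
    have : (1 : Matrix m m ℝ) - A * (M⁻¹ * Aᵀ) = 1 - P := by
      rw [hPdef, Matrix.mul_assoc]
    rw [this]
    exact hIPdet
  have hMSMS : (M - S) * (M - S)⁻¹ = 1 := Matrix.mul_nonsing_inv _ hMSdet
  have hMSMS' : (M - S)⁻¹ * (M - S) = 1 := Matrix.nonsing_inv_mul _ hMSdet
  have hMSsym : (M - S)ᵀ = M - S := by
    rw [Matrix.transpose_sub, hMsym, hS, Matrix.transpose_mul, Matrix.transpose_transpose]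
  have hMSisym : ((M - S)⁻¹)ᵀ = (M - S)⁻¹ := by
    rw [Matrix.transpose_nonsing_inv, hMSsym]
  -- key identities
  have key1 : A * M⁻¹ * (M - S) = (1 - P) * A := by
    rw [Matrix.mul_sub, Matrix.sub_mul, Matrix.one_mul, Matrix.mul_assoc, hMM',
      Matrix.mul_one, hS, ← Matrix.mul_assoc, ← hPdef]
  have key2 : A * (M - S)⁻¹ = Q * (A * M⁻¹) := by
    have e1 : A * M⁻¹ = (1 - P) * A * (M - S)⁻¹ := by
      rw [← key1, Matrix.mul_assoc, hMSMS, Matrix.mul_one]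
    rw [hQ]
    calc A * (M - S)⁻¹ = ((1 - P)⁻¹ * (1 - P)) * (A * (M - S)⁻¹) := by
          rw [hQQ, Matrix.one_mul]
      _ = (1 - P)⁻¹ * ((1 - P) * A * (M - S)⁻¹) := by
          simp only [Matrix.mul_assoc]
      _ = (1 - P)⁻¹ * (A * M⁻¹) := by rw [← e1]
  have key2T : (M - S)⁻¹ * Aᵀ = M⁻¹ * Aᵀ * Q := by
    have := congrArg Matrix.transpose key2
    rw [Matrix.transpose_mul, hMSisym, Matrix.transpose_mul, Matrix.transpose_mul, hMisym,
      hQsym] at this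
    rw [this, Matrix.mul_assoc]
  have key3 : A * (M - S)⁻¹ * M * ((M - S)⁻¹ * Aᵀ) = Q * P * Q := by
    rw [key2, key2T, hPdef]
    have cancel : ∀ Y : Matrix (Fin dd) m ℝ, M⁻¹ * (M * (M⁻¹ * Y)) = M⁻¹ * Y := by
      intro Y
      rw [← Matrix.mul_assoc, ← Matrix.mul_assoc, hMM', Matrix.one_mul]
    simp only [Matrix.mul_assoc]
    rw [cancel]
  -- difference of solutions
  have h1 : (M - S) *ᵥ wstar = Xᵀ *ᵥ y - Aᵀ *ᵥ (A *ᵥ wstar) := by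
    rw [Matrix.sub_mulVec]
    congr 1
    · rw [hws, Matrix.mulVec_mulVec, hMM, Matrix.one_mulVec]
    · rw [hS, ← Matrix.mulVec_mulVec]
  have hlin : (M - S) *ᵥ (wA - wstar) = Aᵀ *ᵥ r := by
    rw [Matrix.mulVec_sub, hwA, Matrix.mulVec_mulVec, hMSMS, Matrix.one_mulVec, h1, hr,
      Matrix.mulVec_sub]
    abel
  have hwdiff : wA - wstar = (M - S)⁻¹ *ᵥ (Aᵀ *ᵥ r) := by
    rw [← hlin, Matrix.mulVec_mulVec, hMSMS', Matrix.one_mulVec]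
  set u : Fin dd → ℝ := wA - wstar with hu0
  set rr : Fin nn → ℝ := X *ᵥ wstar - y with hrr
  have hXrr : Xᵀ *ᵥ rr = 0 := by
    rw [hrr, Matrix.mulVec_sub, Matrix.mulVec_mulVec, ← hM, hws, Matrix.mulVec_mulVec, hMM,
      Matrix.one_mulVec, sub_self]
  have hdecomp : X *ᵥ wA - y = X *ᵥ u + rr := by
    rw [hu0, hrr, Matrix.mulVec_sub]
    abel
  have cross : ∑ j, (X *ᵥ u) j * rr j = 0 := by
    have h0 : (X *ᵥ u) ⬝ᵥ rr = 0 := by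
      rw [dot_helper X u rr, hXrr, dotProduct_zero]
    simpa [dotProduct] using h0
  have pyth : ∑ j, (X *ᵥ wA - y) j ^ 2 = ∑ j, rr j ^ 2 + ∑ j, (X *ᵥ u) j ^ 2 := by
    rw [hdecomp]
    have e : ∀ j, ((X *ᵥ u + rr) j) ^ 2
        = (X *ᵥ u) j ^ 2 + (2 * ((X *ᵥ u) j * rr j) + rr j ^ 2) := by
      intro j
      simp only [Pi.add_apply]
      ring
    rw [Finset.sum_congr rfl fun j _ => e j, Finset.sum_add_distrib, Finset.sum_add_distrib,
      ← Finset.mul_sum, cross]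
    ring
  set C : Matrix (Fin dd) m ℝ := (M - S)⁻¹ * Aᵀ with hC
  have hCu : u = C *ᵥ r := by
    rw [hwdiff, hC, ← Matrix.mulVec_mulVec]
  have hCT : Cᵀ = A * (M - S)⁻¹ := by
    rw [hC, Matrix.transpose_mul, hMSisym, Matrix.transpose_transpose]
  have err_eq : ∑ j, (X *ᵥ u) j ^ 2 = r ⬝ᵥ ((Q * P * Q) *ᵥ r) := by
    have e0 : ∑ j, (X *ᵥ u) j ^ 2 = (X *ᵥ u) ⬝ᵥ (X *ᵥ u) := by
      simp [dotProduct, sq]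
    have e1 : (X *ᵥ u) ⬝ᵥ (X *ᵥ u) = u ⬝ᵥ (M *ᵥ u) := by
      rw [dot_helper X u (X *ᵥ u), Matrix.mulVec_mulVec, ← hM]
    have e2 : u ⬝ᵥ (M *ᵥ u) = r ⬝ᵥ ((Cᵀ * (M * C)) *ᵥ r) := by
      rw [hCu, dot_helper C r (M *ᵥ (C *ᵥ r)), Matrix.mulVec_mulVec, Matrix.mulVec_mulVec,
        Matrix.mul_assoc]
    have e3 : Cᵀ * (M * C) = Q * P * Q := by
      rw [hCT, ← Matrix.mul_assoc, key3]
    rw [e0, e1, e2, e3]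
  have normB : ‖Q * P * Q‖ ≤ ‖P‖ / (1 - ‖P‖) ^ 2 := by
    have h1 : ‖Q * P * Q‖ ≤ ‖Q * P‖ * ‖Q‖ := Matrix.l2_opNorm_mul _ _
    have h2 : ‖Q * P‖ ≤ ‖Q‖ * ‖P‖ := Matrix.l2_opNorm_mul _ _
    have hQle : ‖Q‖ ≤ (1 - ‖P‖)⁻¹ := norm_inv_one_sub_le hP1
    have ha : (0:ℝ) ≤ ‖P‖ := norm_nonneg _
    have hq : (0:ℝ) ≤ ‖Q‖ := norm_nonneg _
    have h1a : (0:ℝ) < 1 - ‖P‖ := by linarith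
    calc ‖Q * P * Q‖ ≤ ‖Q * P‖ * ‖Q‖ := h1
      _ ≤ (‖Q‖ * ‖P‖) * ‖Q‖ := by
          exact mul_le_mul_of_nonneg_right h2 hq
      _ ≤ ((1 - ‖P‖)⁻¹ * ‖P‖) * (1 - ‖P‖)⁻¹ := by
          calc ‖Q‖ * ‖P‖ * ‖Q‖ = ‖Q‖ * (‖P‖ * ‖Q‖) := by ring
            _ ≤ (1 - ‖P‖)⁻¹ * (‖P‖ * (1 - ‖P‖)⁻¹) := by
                refine mul_le_mul hQle ?_ (mul_nonneg ha hq) (inv_nonneg.mpr h1a.le)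
                exact mul_le_mul_of_nonneg_left hQle ha
            _ = ((1 - ‖P‖)⁻¹ * ‖P‖) * (1 - ‖P‖)⁻¹ := by ring
      _ = ‖P‖ / (1 - ‖P‖) ^ 2 := by
          rw [div_eq_mul_inv, sq, mul_inv]
          ring
  have rsq_nonneg : (0:ℝ) ≤ ∑ i, r i ^ 2 := Finset.sum_nonneg fun _ _ => sq_nonneg _
  have err_le : ∑ j, (X *ᵥ u) j ^ 2 ≤ (‖P‖ / (1 - ‖P‖) ^ 2) * ∑ i, r i ^ 2 := by
    rw [err_eq]
    calc r ⬝ᵥ ((Q * P * Q) *ᵥ r) ≤ ‖Q * P * Q‖ * ∑ i, r i ^ 2 := qform_le _ _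
      _ ≤ (‖P‖ / (1 - ‖P‖) ^ 2) * ∑ i, r i ^ 2 :=
          mul_le_mul_of_nonneg_right normB rsq_nonneg
  calc ∑ j, (X *ᵥ wA - y) j ^ 2 = ∑ j, rr j ^ 2 + ∑ j, (X *ᵥ u) j ^ 2 := pyth
    _ ≤ ∑ j, rr j ^ 2 + (‖P‖ / (1 - ‖P‖) ^ 2) * ∑ i, r i ^ 2 := by linarith
    _ = _ := by rw [hrr, hr]
end

lemma card_containing (n k : ℕ) (hk : 1 ≤ k) (i : Fin n) :
    ((Finset.univ.powersetCard k).filter (fun s : Finset (Fin n) => i ∈ s)).card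
      = (n - 1).choose (k - 1) := by
  have key : ((Finset.univ.powersetCard k).filter (fun s : Finset (Fin n) => i ∈ s)).card
      = ((Finset.univ.erase i).powersetCard (k - 1)).card := by
    apply Finset.card_bij' (fun s _ => s.erase i) (fun t _ => insert i t)
    · intro s hs
      simp only [Finset.mem_filter, Finset.mem_powersetCard] at hs
      exact Finset.insert_erase hs.2
    · intro t ht
      simp only [Finset.mem_powersetCard] at ht
      have hit : i ∉ t := fun hmem => (Finset.mem_erase.mp (ht.1 hmem)).1 rfl
      exact Finset.erase_insert hit
    · intro s hs
      simp only [Finset.mem_filter, Finset.mem_powersetCard] at hs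
      rw [Finset.mem_powersetCard]
      constructor
      · intro x hx
        rw [Finset.mem_erase] at hx ⊢
        exact ⟨hx.1, Finset.mem_univ x⟩
      · rw [Finset.card_erase_of_mem hs.2, hs.1.2]
    · intro t ht
      simp only [Finset.mem_powersetCard] at ht
      have hit : i ∉ t := fun hmem => (Finset.mem_erase.mp (ht.1 hmem)).1 rfl
      rw [Finset.mem_filter, Finset.mem_powersetCard]
      refine ⟨⟨Finset.subset_univ _, ?_⟩, Finset.mem_insert_self i t⟩
      rw [Finset.card_insert_of_notMem hit, ht.2]
      omega
  rw [key, Finset.card_powersetCard, Finset.card_erase_of_mem (Finset.mem_univ i),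
    Finset.card_univ, Fintype.card_fin]

lemma sum_over_subsets (n k : ℕ) (hk : 1 ≤ k) (g : Fin n → ℝ) :
    ∑ s ∈ Finset.univ.powersetCard k, ∑ i ∈ s, g i
      = ((n - 1).choose (k - 1) : ℝ) * ∑ i, g i := by
  have e1 : ∀ s ∈ Finset.univ.powersetCard k, ∑ i ∈ s, g i
      = ∑ i : Fin n, if i ∈ s then g i else 0 := by
    intro s hs
    rw [← Finset.sum_filter]
    congr 1
    ext x
    simp
  rw [Finset.sum_congr rfl e1, Finset.sum_comm]
  rw [Finset.mul_sum]
  apply Finset.sum_congr rfl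
  intro i _
  rw [← Finset.sum_filter, Finset.sum_const, card_containing n k hk i]
  simp [mul_comm]

variable {n d : ℕ} {m : Type*} [Fintype m] [DecidableEq m]

lemma PA_submatrix (X : Matrix (Fin n) (Fin d) ℝ) (s : Finset (Fin n)) :
    (X.submatrix (fun i : s => (i : Fin n)) id) * (Xᵀ * X)⁻¹
        * (X.submatrix (fun i : s => (i : Fin n)) id)ᵀ
      = (X * (Xᵀ * X)⁻¹ * Xᵀ).submatrix (fun i : s => (i : Fin n))
          (fun i : s => (i : Fin n)) := by
  ext i j
  simp [Matrix.mul_apply, Matrix.submatrix_apply]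

lemma psd_P (X : Matrix (Fin n) (Fin d) ℝ) (hX : IsUnit (Xᵀ * X))
    (A : Matrix m (Fin d) ℝ) : (A * (Xᵀ * X)⁻¹ * Aᵀ).PosSemidef := by
  have hdet : IsUnit (Xᵀ * X).det := (Matrix.isUnit_iff_isUnit_det _).mp hX
  have hM : (Xᵀ * X).PosSemidef := by
    have h := Matrix.posSemidef_conjTranspose_mul_self X
    rwa [Matrix.conjTranspose_eq_transpose_of_trivial] at h
  have hMsym : (Xᵀ * X)ᵀ = Xᵀ * X := by
    rw [Matrix.transpose_mul, Matrix.transpose_transpose]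
  have hMi : ((Xᵀ * X)⁻¹).PosSemidef := by
    have h2 := hM.mul_mul_conjTranspose_same ((Xᵀ * X)⁻¹)
    rw [Matrix.conjTranspose_eq_transpose_of_trivial, Matrix.transpose_nonsing_inv, hMsym,
      Matrix.nonsing_inv_mul _ hdet, Matrix.one_mul] at h2
    exact h2
  have h3 := hMi.mul_mul_conjTranspose_same A
  rwa [Matrix.conjTranspose_eq_transpose_of_trivial] at h3

lemma trace_hat (X : Matrix (Fin n) (Fin d) ℝ) (hX : IsUnit (Xᵀ * X)) :
    (X * (Xᵀ * X)⁻¹ * Xᵀ).trace = (d : ℝ) := by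
  have hdet : IsUnit (Xᵀ * X).det := (Matrix.isUnit_iff_isUnit_det _).mp hX
  rw [Matrix.trace_mul_comm, ← Matrix.mul_assoc, Matrix.mul_nonsing_inv _ hdet,
    Matrix.trace_one]
  simp

lemma trace_submatrix (H : Matrix (Fin n) (Fin n) ℝ) (s : Finset (Fin n)) :
    (H.submatrix (fun i : s => (i : Fin n)) (fun i : s => (i : Fin n))).trace
      = ∑ i ∈ s, H i i := by
  rw [Matrix.trace]
  rw [← Finset.sum_coe_sort s (fun i => H i i)]
  rfl

lemma tangent_line {x q : ℝ} (hx : 0 < x) (hq : 0 < q) :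
    (1 - q) ^ 2 / q + (1 - 1 / q ^ 2) * (x - q) ≤ (1 - x) ^ 2 / x := by
  rw [← sub_nonneg]
  have e : (1 - x) ^ 2 / x - ((1 - q) ^ 2 / q + (1 - 1 / q ^ 2) * (x - q))
      = (x - q) ^ 2 / (x * q ^ 2) := by
    field_simp
    ring
  rw [e]
  positivity


/-- Throwing out `k` rows `A` jointly sampled with influence probabilities
`p_A ∝ (1-‖P_A‖₂)²/‖P_A‖₂` gives a `(1 + dk²/(n-dk)²)`-approximation in
expectation. For each `k`-subset `s` of the rows, `PA s` is the partial
projection matrix and `wA s` the least-squares solution on the remaining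
rows, given by its normal equations. -/
theorem expected_leave_k_out (n d k : ℕ)
    (X : Matrix (Fin n) (Fin d) ℝ) (y : Fin n → ℝ)
    (hX : IsUnit (Xᵀ * X)) (hrank : X.rank = d) (hdk : d * k < n) :
    let A : (s : Finset (Fin n)) → Matrix s (Fin d) ℝ := fun s =>
      X.submatrix (fun i : s => (i : Fin n)) id
    let PA : (s : Finset (Fin n)) → Matrix s s ℝ := fun s =>
      A s * (Xᵀ * X)⁻¹ * (A s)ᵀ
    let yA : (s : Finset (Fin n)) → (s → ℝ) := fun s i => y i
    let wA : (s : Finset (Fin n)) → (Fin d → ℝ) := fun s =>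
      (Xᵀ * X - (A s)ᵀ * A s)⁻¹ *ᵥ (Xᵀ *ᵥ y - (A s)ᵀ *ᵥ yA s)
    let wstar : Fin d → ℝ := (Xᵀ * X)⁻¹ *ᵥ (Xᵀ *ᵥ y)
    let Z : ℝ := ∑ s ∈ Finset.univ.powersetCard k,
      (1 - opNorm (PA s)) ^ 2 / opNorm (PA s)
    let p : Finset (Fin n) → ℝ := fun s =>
      (1 / Z) * ((1 - opNorm (PA s)) ^ 2 / opNorm (PA s))
    (∀ s ∈ Finset.univ.powersetCard k, 0 < opNorm (PA s)) →
    (∀ s ∈ Finset.univ.powersetCard k, opNorm (PA s) < 1) →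
      ∑ s ∈ Finset.univ.powersetCard k, p s * ∑ j, (X *ᵥ wA s - y) j ^ 2
        ≤ (1 + (d : ℝ) * k ^ 2 / ((n : ℝ) - d * k) ^ 2)
            * ∑ j, (X *ᵥ wstar - y) j ^ 2 := by
  intro A PA yA wA wstar Z p hpos hlt
  classical
  have hA : ∀ s : Finset (Fin n), A s = X.submatrix (fun i : s => (i : Fin n)) id :=
    fun _ => rfl
  have hPA : ∀ s : Finset (Fin n),
      PA s = A s * (Xᵀ * X)⁻¹ * (A s)ᵀ := fun _ => rfl
  have hyA : ∀ (s : Finset (Fin n)), yA s = fun i : s => y i := fun _ => rfl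
  have hwAe : ∀ s : Finset (Fin n),
      wA s = (Xᵀ * X - (A s)ᵀ * A s)⁻¹ *ᵥ (Xᵀ *ᵥ y - (A s)ᵀ *ᵥ yA s) := fun _ => rfl
  have hwstar : wstar = (Xᵀ * X)⁻¹ *ᵥ (Xᵀ *ᵥ y) := rfl
  have hZ : Z = ∑ s ∈ Finset.univ.powersetCard k,
      (1 - opNorm (PA s)) ^ 2 / opNorm (PA s) := rfl
  have hp : ∀ s, p s = (1 / Z) * ((1 - opNorm (PA s)) ^ 2 / opNorm (PA s)) := fun _ => rfl
  clear_value A PA yA wA wstar Z p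
  set rres : Fin n → ℝ := X *ᵥ wstar - y with hrres
  set base : ℝ := ∑ j, rres j ^ 2 with hbase
  have hbase0 : 0 ≤ base := Finset.sum_nonneg fun _ _ => sq_nonneg _
  have hnd : (0:ℝ) < (n:ℝ) - (d:ℝ) * (k:ℝ) := by
    have h : ((d * k : ℕ) : ℝ) < ((n : ℕ) : ℝ) := by exact_mod_cast hdk
    push_cast at h
    linarith
  set c2 : ℝ := (d : ℝ) * (k:ℝ) ^ 2 / ((n : ℝ) - (d:ℝ) * (k:ℝ)) ^ 2 with hc2def
  have hc2 : (0:ℝ) ≤ c2 := by positivity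
  rcases Finset.eq_empty_or_nonempty (Finset.univ.powersetCard k (α := Fin n)) with hFe | hFne
  · rw [hFe, Finset.sum_empty]
    exact mul_nonneg (by linarith) hbase0
  -- nondegeneracy
  have hk1 : 1 ≤ k := by
    by_contra hk
    have hk0 : k = 0 := by omega
    obtain ⟨s₀, hs₀⟩ := hFne
    have hcard : s₀.card = k := (Finset.mem_powersetCard.mp hs₀).2
    have hs0 : s₀ = ∅ := Finset.card_eq_zero.mp (by omega)
    have hE : IsEmpty ↥s₀ := Finset.isEmpty_coe_sort.mpr hs0
    have hz : PA s₀ = 0 := by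
      rw [hPA]
      ext i j
      exact isEmptyElim i
    have h0 := hpos s₀ hs₀
    rw [hz, opNorm_eq_norm, norm_zero] at h0
    exact lt_irrefl 0 h0
  have hd1 : 1 ≤ d := by
    by_contra hd
    have hd0 : d = 0 := by omega
    obtain ⟨s₀, hs₀⟩ := hFne
    have hz : PA s₀ = 0 := by
      rw [hPA]
      subst hd0
      ext i j
      rw [Matrix.mul_apply]
      simp
    have h0 := hpos s₀ hs₀
    rw [hz, opNorm_eq_norm, norm_zero] at h0
    exact lt_irrefl 0 h0
  have hn1 : 1 ≤ n := by omega
  set Cc : ℝ := ((n - 1).choose (k - 1) : ℝ) with hCc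
  set N : ℝ := ((Finset.univ.powersetCard k (α := Fin n)).card : ℝ) with hN
  have hNchoose : N = (n.choose k : ℝ) := by
    rw [hN, Finset.card_powersetCard, Finset.card_univ, Fintype.card_fin]
  have hNpos : 0 < N := by
    rw [hN]
    exact_mod_cast Finset.card_pos.mpr hFne
  have hNk : (n : ℝ) * Cc = N * (k : ℝ) := by
    have hnat : n * ((n-1).choose (k-1)) = (n.choose k) * k := by
      have h := Nat.add_one_mul_choose_eq (n - 1) (k - 1)
      have e1 : n - 1 + 1 = n := by omega
      have e2 : k - 1 + 1 = k := by omega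
      rw [e1, e2] at h
      exact h
    rw [hCc, hNchoose]
    exact_mod_cast hnat
  set q : ℝ := (d : ℝ) * (k:ℝ) / (n : ℝ) with hq
  have hn0 : (0:ℝ) < (n:ℝ) := by exact_mod_cast hn1
  have hd0' : (0:ℝ) < (d:ℝ) := by exact_mod_cast hd1
  have hk0' : (0:ℝ) < (k:ℝ) := by exact_mod_cast hk1
  have hq0 : 0 < q := by
    rw [hq]
    positivity
  have hq1 : q < 1 := by
    rw [hq, div_lt_one hn0]
    linarith
  -- per-subset key bound
  have hbase_eq : base = ∑ j, ((X *ᵥ ((Xᵀ * X)⁻¹ *ᵥ (Xᵀ *ᵥ y)) - y) j) ^ 2 := by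
    rw [hbase]
    apply Finset.sum_congr rfl
    intro j _
    rw [hrres, hwstar]
  have hkey : ∀ s ∈ Finset.univ.powersetCard k (α := Fin n),
      ∑ j, (X *ᵥ wA s - y) j ^ 2
        ≤ base + (opNorm (PA s) / (1 - opNorm (PA s)) ^ 2) * ∑ i ∈ s, rres i ^ 2 := by
    intro s hs
    have hcard : s.card = k := (Finset.mem_powersetCard.mp hs).2
    haveI : Nonempty ↥s := Finset.nonempty_coe_sort.mpr (Finset.card_pos.mp (by omega))
    have hlt' : ‖X.submatrix (fun i : s => (i : Fin n)) id * (Xᵀ * X)⁻¹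
        * (X.submatrix (fun i : s => (i : Fin n)) id)ᵀ‖ < 1 := by
      have h := hlt s hs
      rw [hPA, hA, opNorm_eq_norm] at h
      exact h
    have h := leave_out_bound X y hX (X.submatrix (fun i : s => (i : Fin n)) id) (yA s) hlt'
    have hsum : ∑ i, ((X.submatrix (fun i : s => (i : Fin n)) id *ᵥ ((Xᵀ * X)⁻¹ *ᵥ (Xᵀ *ᵥ y))
        - yA s) i) ^ 2 = ∑ i ∈ s, rres i ^ 2 := by
      rw [← Finset.sum_coe_sort s (fun i => rres i ^ 2)]
      apply Finset.sum_congr rfl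
      intro i _
      have e : (X.submatrix (fun i : s => (i : Fin n)) id *ᵥ ((Xᵀ * X)⁻¹ *ᵥ (Xᵀ *ᵥ y))
          - yA s) i = rres ↑i := by
        rw [hrres, hwstar, hyA]
        simp [Matrix.mulVec, dotProduct, Matrix.submatrix_apply, Matrix.mul_apply,
          Finset.sum_mul]
      rw [e]
    rw [hsum] at h
    rw [hwAe, hA, hPA, hA, opNorm_eq_norm, hbase_eq]
    exact h
  -- Z is positive
  have hfpos : ∀ s ∈ Finset.univ.powersetCard k (α := Fin n),
      0 < (1 - opNorm (PA s)) ^ 2 / opNorm (PA s) := by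
    intro s hs
    have h1 := hpos s hs
    have h2 := hlt s hs
    exact div_pos (by nlinarith) h1
  have hZpos : 0 < Z := by
    rw [hZ]
    exact Finset.sum_pos hfpos hFne
  -- expectation of p is 1
  have hsum_p : ∑ s ∈ Finset.univ.powersetCard k (α := Fin n), p s = 1 := by
    calc ∑ s ∈ Finset.univ.powersetCard k (α := Fin n), p s
        = ∑ s ∈ Finset.univ.powersetCard k (α := Fin n),
            (1 / Z) * ((1 - opNorm (PA s)) ^ 2 / opNorm (PA s)) :=
          Finset.sum_congr rfl fun s _ => hp s
      _ = (1 / Z) * ∑ s ∈ Finset.univ.powersetCard k (α := Fin n),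
            (1 - opNorm (PA s)) ^ 2 / opNorm (PA s) := by rw [Finset.mul_sum]
      _ = (1 / Z) * Z := by rw [← hZ]
      _ = 1 := one_div_mul_cancel hZpos.ne'
  have hppos : ∀ s ∈ Finset.univ.powersetCard k (α := Fin n), 0 ≤ p s := by
    intro s hs
    rw [hp s]
    exact mul_nonneg (one_div_nonneg.mpr hZpos.le) (hfpos s hs).le
  -- step 1: plug in key bound
  have step1 : ∑ s ∈ Finset.univ.powersetCard k (α := Fin n), p s * ∑ j, (X *ᵥ wA s - y) j ^ 2
      ≤ ∑ s ∈ Finset.univ.powersetCard k (α := Fin n),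
          p s * (base + (opNorm (PA s) / (1 - opNorm (PA s)) ^ 2) * ∑ i ∈ s, rres i ^ 2) :=
    Finset.sum_le_sum fun s hs => mul_le_mul_of_nonneg_left (hkey s hs) (hppos s hs)
  -- step 2: simplify
  have hps_c : ∀ s ∈ Finset.univ.powersetCard k (α := Fin n),
      p s * ((opNorm (PA s) / (1 - opNorm (PA s)) ^ 2) * ∑ i ∈ s, rres i ^ 2)
        = (1 / Z) * ∑ i ∈ s, rres i ^ 2 := by
    intro s hs
    have h1 := hpos s hs
    have h2 := hlt s hs
    have h3 : (1 : ℝ) - opNorm (PA s) ≠ 0 := by linarith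
    rw [hp s]
    have h4 : (1 - opNorm (PA s)) ^ 2 / opNorm (PA s)
        * (opNorm (PA s) / (1 - opNorm (PA s)) ^ 2) = 1 := by
      field_simp
    calc (1 / Z) * ((1 - opNorm (PA s)) ^ 2 / opNorm (PA s))
        * ((opNorm (PA s) / (1 - opNorm (PA s)) ^ 2) * ∑ i ∈ s, rres i ^ 2)
        = (1 / Z) * ((1 - opNorm (PA s)) ^ 2 / opNorm (PA s)
            * (opNorm (PA s) / (1 - opNorm (PA s)) ^ 2)) * ∑ i ∈ s, rres i ^ 2 := by ring
      _ = (1 / Z) * ∑ i ∈ s, rres i ^ 2 := by rw [h4]; ring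
  have step2 : ∑ s ∈ Finset.univ.powersetCard k (α := Fin n),
      p s * (base + (opNorm (PA s) / (1 - opNorm (PA s)) ^ 2) * ∑ i ∈ s, rres i ^ 2)
      = base + (1 / Z) * (Cc * base) := by
    have e1 : ∀ s ∈ Finset.univ.powersetCard k (α := Fin n),
        p s * (base + (opNorm (PA s) / (1 - opNorm (PA s)) ^ 2) * ∑ i ∈ s, rres i ^ 2)
          = p s * base + (1 / Z) * ∑ i ∈ s, rres i ^ 2 := by
      intro s hs
      rw [mul_add, hps_c s hs]
    rw [Finset.sum_congr rfl e1, Finset.sum_add_distrib, ← Finset.sum_mul, hsum_p, one_mul,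
      ← Finset.mul_sum, sum_over_subsets n k hk1 (fun i => rres i ^ 2), ← hbase, ← hCc]
  -- trace bound on sum of norms
  have htr : ∀ s ∈ Finset.univ.powersetCard k (α := Fin n),
      opNorm (PA s) ≤ ∑ i ∈ s, (X * (Xᵀ * X)⁻¹ * Xᵀ) i i := by
    intro s hs
    have hpsd := psd_P X hX (X.submatrix (fun i : s => (i : Fin n)) id)
    have h1 := norm_le_trace hpsd
    rw [PA_submatrix, trace_submatrix] at h1
    rw [hPA, hA, opNorm_eq_norm]
    exact h1
  have hsum_a : ∑ s ∈ Finset.univ.powersetCard k (α := Fin n), opNorm (PA s) ≤ Cc * (d:ℝ) := by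
    calc ∑ s ∈ Finset.univ.powersetCard k (α := Fin n), opNorm (PA s)
        ≤ ∑ s ∈ Finset.univ.powersetCard k (α := Fin n),
            ∑ i ∈ s, (X * (Xᵀ * X)⁻¹ * Xᵀ) i i := Finset.sum_le_sum htr
      _ = Cc * ∑ i, (X * (Xᵀ * X)⁻¹ * Xᵀ) i i := by
          rw [sum_over_subsets n k hk1 (fun i => (X * (Xᵀ * X)⁻¹ * Xᵀ) i i), hCc]
      _ = Cc * (d:ℝ) := by
          congr 1
          have h2 := trace_hat X hX
          rw [Matrix.trace] at h2
          simpa [Matrix.diag] using h2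
  have hNqCc : N * q = Cc * (d:ℝ) := by
    rw [hq]
    field_simp
    linear_combination (-1:ℝ) * hNk
  -- tangent line: Z ≥ N * f(q)
  have hZge : N * ((1 - q) ^ 2 / q) ≤ Z := by
    have htang : ∀ s ∈ Finset.univ.powersetCard k (α := Fin n),
        (1 - q) ^ 2 / q + (1 - 1 / q ^ 2) * (opNorm (PA s) - q)
          ≤ (1 - opNorm (PA s)) ^ 2 / opNorm (PA s) := fun s hs =>
      tangent_line (hpos s hs) hq0
    have h1 := Finset.sum_le_sum htang
    have e : ∑ _s ∈ Finset.univ.powersetCard k (α := Fin n), ((1 - q) ^ 2 / q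
        + (1 - 1 / q ^ 2) * (opNorm (PA _s) - q))
        = N * ((1 - q) ^ 2 / q) + (1 - 1 / q ^ 2)
            * ((∑ s ∈ Finset.univ.powersetCard k (α := Fin n), opNorm (PA s))
              - N * q) := by
      rw [Finset.sum_add_distrib, Finset.sum_const, ← Finset.mul_sum, Finset.sum_sub_distrib,
        Finset.sum_const, nsmul_eq_mul, nsmul_eq_mul, hN]
    rw [e, ← hZ] at h1
    have hcn : 1 - 1 / q ^ 2 ≤ 0 := by
      have hle : q ^ 2 ≤ 1 := by nlinarith
      have h2 : (1:ℝ) ≤ 1 / q ^ 2 := by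
        rw [le_div_iff₀ (by positivity)]
        linarith
      linarith
    have hneg : (∑ s ∈ Finset.univ.powersetCard k (α := Fin n), opNorm (PA s)) - N * q ≤ 0 := by
      rw [hNqCc]
      linarith [hsum_a]
    have hprod : 0 ≤ (1 - 1 / q ^ 2)
        * ((∑ s ∈ Finset.univ.powersetCard k (α := Fin n), opNorm (PA s)) - N * q) := by
      nlinarith [mul_nonneg (neg_nonneg.mpr hcn) (neg_nonneg.mpr hneg)]
    linarith
  -- the key coefficient identity
  have hCcEq : Cc = N * ((1 - q) ^ 2 / q) * c2 := by
    have h1q : (1:ℝ) - q = ((n:ℝ) - (d:ℝ)*(k:ℝ)) / n := by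
      rw [hq]
      field_simp
    rw [h1q, hq, hc2def]
    field_simp
    linear_combination hNk
  have hCoef : (1 / Z) * Cc ≤ c2 := by
    have e : (1 / Z) * Cc = Cc / Z := by ring
    rw [e, div_le_iff₀ hZpos]
    calc Cc = N * ((1 - q) ^ 2 / q) * c2 := hCcEq
      _ ≤ Z * c2 := mul_le_mul_of_nonneg_right hZge hc2
      _ = c2 * Z := by ring
  -- finish
  calc ∑ s ∈ Finset.univ.powersetCard k (α := Fin n), p s * ∑ j, (X *ᵥ wA s - y) j ^ 2
      ≤ base + (1 / Z) * (Cc * base) := step1.trans (le_of_eq step2)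
    _ ≤ base + c2 * base := by
        have e : (1 / Z) * (Cc * base) = ((1 / Z) * Cc) * base := by ring
        rw [e]
        have h5 := mul_le_mul_of_nonneg_right hCoef hbase0
        linarith
    _ = (1 + c2) * base := by ring
end
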